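/- Given Q-metric spaces (X₁,d₁) over a continuous quantale Q₁ and (X₂,d₂) over a continuous quantale Q₂, a map f : X₁ → X₂ is continuous for the open ball topologies iff for all x ∈ X₁ and all ε ≪ 1₂ there exists δ ≪ 1₁ with f(B(x,δ)) ⊆ B(f(x),ε). -/

import Mathlib

/-!
Continuity of the ball topologies reduces to the statement that every ball is a neighbourhood of
each of its points. For `y ∈ B(x, δ₀)`, i.e. `δ₀ ≪ d x y`, interpolate `δ₀ ≪ m ≪ d x y`; since
`d x y = d x y ⊗ ⋁ {δ | δ ≪ 1} = ⋁ {d x y ⊗ δ | δ ≪ 1}` is a directed join, `m ≤ d x y ⊗ δ` for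
some `δ ≪ 1`, and then the triangle inequality gives `B(y, δ) ⊆ B(x, δ₀)`. Hence the balls form a
basis, and the `ε`-`δ` condition is continuity tested on basic open sets.
-/

/-- `a` is way-below `b`: for every nonempty directed `D` with `b ≤ sSup D`,
some element of `D` dominates `a`. -/
def WayBelow {Q : Type*} [CompleteLattice Q] (a b : Q) : Prop :=
  ∀ D : Set Q, D.Nonempty → DirectedOn (· ≤ ·) D → b ≤ sSup D → ∃ d ∈ D, a ≤ d

/-- A complete lattice is continuous if every element is the join of the
elements way-below it. -/
def ContinuousLattice (Q : Type*) [CompleteLattice Q] : Prop :=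
  ∀ x : Q, x = sSup {y | WayBelow y x}

/-- Open ball in a `Q`-metric space. -/
def ball {Q X : Type*} [CompleteLattice Q] (d : X → X → Q) (x : X) (δ : Q) : Set X :=
  {y | WayBelow δ (d x y)}

namespace WayBelow

variable {Q : Type*} [CompleteLattice Q] {a a' b c : Q}

lemma le (h : WayBelow a b) : a ≤ b := by
  obtain ⟨d, hd, had⟩ :=
    h {b} (Set.singleton_nonempty b) (directedOn_singleton b) sSup_singleton.ge
  rwa [Set.mem_singleton_iff.mp hd] at had

lemma mono_left (h' : a' ≤ a) (h : WayBelow a b) : WayBelow a' b :=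
  fun D hne hdir hle => (h D hne hdir hle).imp fun _ hd => ⟨hd.1, h'.trans hd.2⟩

lemma trans_le (h : WayBelow a b) (hbc : b ≤ c) : WayBelow a c :=
  fun D hne hdir hle => h D hne hdir (hbc.trans hle)

lemma bot (b : Q) : WayBelow ⊥ b :=
  fun _ hne _ _ => hne.imp fun _ hd => ⟨hd, bot_le⟩

lemma sup (ha : WayBelow a c) (hb : WayBelow b c) : WayBelow (a ⊔ b) c := by
  intro D hne hdir hle
  obtain ⟨d₁, hd₁, had₁⟩ := ha D hne hdir hle
  obtain ⟨d₂, hd₂, hbd₂⟩ := hb D hne hdir hle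
  obtain ⟨d, hd, hd₁d, hd₂d⟩ := hdir d₁ hd₁ d₂ hd₂
  exact ⟨d, hd, sup_le (had₁.trans hd₁d) (hbd₂.trans hd₂d)⟩

lemma directedOn_setOf (b : Q) : DirectedOn (· ≤ ·) {a | WayBelow a b} :=
  fun a ha a' ha' => ⟨a ⊔ a', ha.sup ha', le_sup_left, le_sup_right⟩

lemma exists_between (hQ : ContinuousLattice Q) (h : WayBelow a b) :
    ∃ m, WayBelow a m ∧ WayBelow m b := by
  set D : Set Q := {u | ∃ v, WayBelow u v ∧ WayBelow v b}
  have hdir : DirectedOn (· ≤ ·) D := by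
    rintro u₁ ⟨v₁, hu₁, hv₁⟩ u₂ ⟨v₂, hu₂, hv₂⟩
    exact ⟨u₁ ⊔ u₂, ⟨v₁ ⊔ v₂, (hu₁.trans_le le_sup_left).sup (hu₂.trans_le le_sup_right),
      hv₁.sup hv₂⟩, le_sup_left, le_sup_right⟩
  have hb : b ≤ sSup D := by
    rw [hQ b]
    refine sSup_le fun v hv => ?_
    rw [hQ v]
    exact sSup_le fun u hu => le_sSup ⟨v, hu, hv⟩
  obtain ⟨u, ⟨v, huv, hvb⟩, hau⟩ := h D ⟨⊥, ⊥, bot _, bot _⟩ hdir hb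
  exact ⟨v, huv.mono_left hau, hvb⟩

lemma exists_wayBelow_one_forall_wayBelow_mul [Monoid Q] [IsQuantale Q]
    (hQ : ContinuousLattice Q) (h : WayBelow a b) :
    ∃ δ : Q, WayBelow δ 1 ∧ ∀ c, WayBelow δ c → WayBelow a (b * c) := by
  obtain ⟨m, ham, hmb⟩ := h.exists_between hQ
  set D : Set Q := (b * ·) '' {δ | WayBelow δ 1}
  have hdir : DirectedOn (· ≤ ·) D :=
    (directedOn_setOf 1).mono_comp fun _ _ h => mul_le_mul_right h b
  have hb : b ≤ sSup D := by
    rw [sSup_image, ← mul_sSup_distrib, ← hQ 1, mul_one]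
  obtain ⟨_, ⟨δ, hδ, rfl⟩, hm⟩ := hmb D ⟨b * ⊥, ⊥, bot 1, rfl⟩ hdir hb
  exact ⟨δ, hδ, fun c hδc => ham.trans_le (hm.trans (mul_le_mul_right hδc.le b))⟩

end WayBelow

section BallTopology

open TopologicalSpace Topology

variable {Q X : Type*} [CompleteLattice Q] [Monoid Q] {d : X → X → Q}

def balls (d : X → X → Q) : Set (Set X) :=
  {s | ∃ (x : X) (δ : Q), WayBelow δ 1 ∧ s = ball d x δ}

lemma mem_ball_self (hrefl : ∀ x, 1 ≤ d x x) {x : X} {δ : Q} (hδ : WayBelow δ 1) :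
    x ∈ ball d x δ :=
  hδ.trans_le (hrefl x)

lemma exists_ball_subset_ball [IsQuantale Q] (hQ : ContinuousLattice Q)
    (htri : ∀ x y z, d x y * d y z ≤ d x z) {x y : X} {δ₀ : Q} (hy : y ∈ ball d x δ₀) :
    ∃ δ : Q, WayBelow δ 1 ∧ ball d y δ ⊆ ball d x δ₀ := by
  obtain ⟨δ, hδ, hmul⟩ := WayBelow.exists_wayBelow_one_forall_wayBelow_mul hQ hy
  exact ⟨δ, hδ, fun z hz => (hmul (d y z) hz).trans_le (htri x y z)⟩

lemma isTopologicalBasis_balls [IsQuantale Q] (hQ : ContinuousLattice Q)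
    (hrefl : ∀ x, 1 ≤ d x x) (htri : ∀ x y z, d x y * d y z ≤ d x z) :
    @IsTopologicalBasis X (generateFrom (balls d)) (balls d) := by
  let := generateFrom (balls d)
  refine ⟨?_, ?_, rfl⟩
  · rintro _ ⟨x₁, δ₁, -, rfl⟩ _ ⟨x₂, δ₂, -, rfl⟩ x ⟨hx₁, hx₂⟩
    obtain ⟨ε₁, hε₁, hsub₁⟩ := exists_ball_subset_ball hQ htri hx₁
    obtain ⟨ε₂, hε₂, hsub₂⟩ := exists_ball_subset_ball hQ htri hx₂
    refine ⟨ball d x (ε₁ ⊔ ε₂), ⟨x, _, hε₁.sup hε₂, rfl⟩, mem_ball_self hrefl (hε₁.sup hε₂),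
      fun y hy => ⟨hsub₁ (hy.mono_left le_sup_left), hsub₂ (hy.mono_left le_sup_right)⟩⟩
  · exact Set.eq_univ_of_forall fun x =>
      ⟨ball d x ⊥, ⟨x, ⊥, WayBelow.bot 1, rfl⟩, mem_ball_self hrefl (WayBelow.bot 1)⟩

lemma isOpen_generateFrom_balls_iff [IsQuantale Q] (hQ : ContinuousLattice Q)
    (hrefl : ∀ x, 1 ≤ d x x) (htri : ∀ x y z, d x y * d y z ≤ d x z) {U : Set X} :
    IsOpen[generateFrom (balls d)] U ↔ ∀ x ∈ U, ∃ δ : Q, WayBelow δ 1 ∧ ball d x δ ⊆ U := by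
  let := generateFrom (balls d)
  rw [(isTopologicalBasis_balls hQ hrefl htri).isOpen_iff]
  refine forall₂_congr fun x _ =>
    ⟨?_, fun ⟨δ, hδ, hsub⟩ => ⟨_, ⟨x, δ, hδ, rfl⟩, mem_ball_self hrefl hδ, hsub⟩⟩
  rintro ⟨_, ⟨y, δ₀, -, rfl⟩, hx, hsub⟩
  obtain ⟨δ, hδ, hball⟩ := exists_ball_subset_ball hQ htri hx
  exact ⟨δ, hδ, hball.trans hsub⟩

end BallTopology

theorem continuous_iff_epsilon_delta {Q₁ Q₂ X₁ X₂ : Type*}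
    [CompleteLattice Q₁] [Monoid Q₁] [IsQuantale Q₁]
    [CompleteLattice Q₂] [Monoid Q₂] [IsQuantale Q₂]
    (hcont₁ : ContinuousLattice Q₁) (hcont₂ : ContinuousLattice Q₂)
    (d₁ : X₁ → X₁ → Q₁) (hrefl₁ : ∀ x : X₁, 1 ≤ d₁ x x)
    (htri₁ : ∀ x y z : X₁, d₁ x y * d₁ y z ≤ d₁ x z)
    (d₂ : X₂ → X₂ → Q₂) (hrefl₂ : ∀ x : X₂, 1 ≤ d₂ x x)
    (htri₂ : ∀ x y z : X₂, d₂ x y * d₂ y z ≤ d₂ x z)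
    (f : X₁ → X₂) :
    @Continuous X₁ X₂
      (TopologicalSpace.generateFrom
        {s | ∃ (x : X₁) (δ : Q₁), WayBelow δ 1 ∧ s = ball d₁ x δ})
      (TopologicalSpace.generateFrom
        {s | ∃ (x : X₂) (δ : Q₂), WayBelow δ 1 ∧ s = ball d₂ x δ}) f ↔
      ∀ (x : X₁) (ε : Q₂), WayBelow ε 1 →
        ∃ δ : Q₁, WayBelow δ 1 ∧ f '' ball d₁ x δ ⊆ ball d₂ (f x) ε := by
  let := TopologicalSpace.generateFrom (balls d₁)
  let := TopologicalSpace.generateFrom (balls d₂)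
  change Continuous f ↔ _
  simp_rw [Set.image_subset_iff]
  constructor
  · intro hf x ε hε
    have hopen : IsOpen (f ⁻¹' ball d₂ (f x) ε) :=
      (TopologicalSpace.isOpen_generateFrom_of_mem (g := balls d₂) ⟨f x, ε, hε, rfl⟩).preimage hf
    exact (isOpen_generateFrom_balls_iff hcont₁ hrefl₁ htri₁).mp hopen x
      (mem_ball_self hrefl₂ hε)
  · intro h
    refine continuous_generateFrom_iff.mpr ?_
    rintro _ ⟨y, ε₀, -, rfl⟩
    refine (isOpen_generateFrom_balls_iff hcont₁ hrefl₁ htri₁).mpr fun x hx => ?_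
    obtain ⟨ε, hε, hsub⟩ := exists_ball_subset_ball hcont₂ htri₂ hx
    obtain ⟨δ, hδ, hpre⟩ := h x ε hε
    exact ⟨δ, hδ, hpre.trans (Set.preimage_mono hsub)⟩
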